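/- Let G be a finite graph with a separation (X, Y) of order k = |X ∩ Y|, let F be a spanning tree of G (assume G connected), and set G_X = G[X] ∪ F. Then there exists a set A of at most k - 1 edges of F such that the k vertices of X ∩ Y lie in pairwise different components of F - A, and the graph G[X] ∪ (F - A) has the same cycle space dimension as G[X] (adding the trees of F - A creates no new cycles), so bn(G[X] ∪ (F - A)) = bn(G[X]). -/

import Mathlib

/-!
Cut the tree `F` one edge at a time, each time at an edge of the tree path between two vertices
of `X ∩ Y` that are still connected; every cut raises the number of components meeting `X ∩ Y`
by one, so at most `k - 1` cuts are needed. Let `C` be an even edge set of `G[X] ∪ (F - A)` and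
`D` its edges leaving `X`. They lie in the forest `F - A`, and by the separation every vertex of
odd `D`-degree lies in `X ∩ Y`. By the handshake lemma a component of `F - A` never contains
exactly one vertex of odd `D`-degree, and it contains at most one vertex of `X ∩ Y`, so `D` is an
even edge set of a forest, hence empty (every forest edge is a bridge). The basis number only
depends on the graph through its cycle space.
-/

variable {V : Type*} [Fintype V] [DecidableEq V]

/-- An F2-cycle relative to an edge set `E`: a finite set of edges, all belonging to `E`,
in which every vertex has even degree. -/
def IsF2CycleIn (E : Set (Sym2 V)) (C : Finset (Sym2 V)) : Prop :=
  (∀ e ∈ C, e ∈ E) ∧ ∀ v : V, Even ((C.filter (fun e => v ∈ e)).card)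

/-- `B` generates the cycle space of the graph with edge set `E`: every F2-cycle is a
symmetric difference of a subfamily of `B`. -/
def GeneratesIn (E : Set (Sym2 V)) (B : List (Finset (Sym2 V))) : Prop :=
  ∀ C : Finset (Sym2 V), IsF2CycleIn E C →
    ∃ l : List (Finset (Sym2 V)), l.Sublist B ∧ C = l.foldr symmDiff ∅

/-- The basis number of the graph with edge set `E`: the least `k` such that some
family of F2-cycles generating the cycle space uses each edge at most `k` times. -/
noncomputable def bnSet (E : Set (Sym2 V)) : ℕ :=
  sInf {k | ∃ B : List (Finset (Sym2 V)), (∀ X ∈ B, IsF2CycleIn E X) ∧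
    GeneratesIn E B ∧ ∀ e : Sym2 V, B.countP (fun X => decide (e ∈ X)) ≤ k}

/-- The basis number of a graph. -/
noncomputable def SimpleGraph.bn (G : SimpleGraph V) : ℕ := bnSet G.edgeSet
/-- An F2-cycle of `G`. -/
def SimpleGraph.IsF2Cycle (G : SimpleGraph V) (C : Finset (Sym2 V)) : Prop :=
  IsF2CycleIn G.edgeSet C

/-- The restriction `G[X]` of `G` to a vertex set `X`, kept on the same vertex type
(only edges with both endpoints in `X` remain). -/
def SimpleGraph.restrict (G : SimpleGraph V) (X : Set V) : SimpleGraph V where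
  Adj u v := G.Adj u v ∧ u ∈ X ∧ v ∈ X
  symm := ⟨fun u v h => ⟨h.1.symm, h.2.2, h.2.1⟩⟩
  loopless := ⟨fun v h => G.irrefl h.1⟩

open Finset

section

variable {α : Type*} [DecidableEq α]

def edgeDegree (D : Finset (Sym2 α)) (v : α) : ℕ := #(D.filter (fun e => v ∈ e))

lemma sum_edgeDegree_eq_two_mul_card [Fintype α] {D : Finset (Sym2 α)}
    (hD : ∀ e ∈ D, ¬ e.IsDiag) : ∑ v, edgeDegree D v = 2 * #D := by
  simp only [edgeDegree, card_filter]
  rw [sum_comm, mul_comm, ← smul_eq_mul, ← sum_const]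
  refine sum_congr rfl fun e he => ?_
  rw [sum_boole, ← Sym2.card_toFinset_of_not_isDiag e (hD e he)]
  congr 2
  ext v
  simp

lemma edgeDegree_erase_of_notMem {D : Finset (Sym2 α)} {e : Sym2 α} {v : α} (hv : v ∉ e) :
    edgeDegree (D.erase e) v = edgeDegree D v := by
  rw [edgeDegree, filter_erase, erase_eq_of_notMem (by simp [hv]), edgeDegree]

lemma edgeDegree_erase_add_one {D : Finset (Sym2 α)} {e : Sym2 α} {v : α} (he : e ∈ D)
    (hv : v ∈ e) : edgeDegree (D.erase e) v + 1 = edgeDegree D v := by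
  rw [edgeDegree, filter_erase, card_erase_add_one (mem_filter.mpr ⟨he, hv⟩), edgeDegree]

lemma bnSet_congr {E E' : Set (Sym2 α)} (h : ∀ C, IsF2CycleIn E C ↔ IsF2CycleIn E' C) :
    bnSet E = bnSet E' := by
  have hcycle : IsF2CycleIn E = IsF2CycleIn E' := funext fun C => propext (h C)
  unfold bnSet GeneratesIn
  rw [hcycle]

end

namespace SimpleGraph

variable {α : Type*}

lemma mem_edgeSet_restrict {G : SimpleGraph α} {X : Set α} {e : Sym2 α} :
    e ∈ (G.restrict X).edgeSet ↔ e ∈ G.edgeSet ∧ ∀ v ∈ e, v ∈ X := by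
  induction e with | h x y =>
  simp [restrict]

lemma Reachable.of_mem_edge {H : SimpleGraph α} {e : Sym2 α} (he : e ∈ H.edgeSet) {v w : α}
    (hv : v ∈ e) (hw : w ∈ e) : H.Reachable v w := by
  induction e with | h x y =>
  simp only [Sym2.mem_iff] at hv hw
  rcases hv with rfl | rfl <;> rcases hw with rfl | rfl
  exacts [.rfl, Adj.reachable he, (Adj.reachable he).symm, .rfl]

lemma IsAcyclic.exists_not_reachable_deleteEdges {F : SimpleGraph α} (hF : F.IsAcyclic)
    {s t : α} (hst : s ≠ t) (hr : F.Reachable s t) :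
    ∃ e ∈ F.edgeSet, ¬ (F.deleteEdges {e}).Reachable s t := by
  obtain ⟨p, hp⟩ := hr.exists_isPath
  cases p with
  | nil => exact absurd rfl hst
  | @cons _ u _ hsu q =>
    refine ⟨s(s, u), hsu, fun hst' => ?_⟩
    have hs : s ∉ q.support := ((Walk.cons_isPath_iff hsu q).mp hp).2
    have hut : (F.deleteEdges {s(s, u)}).Reachable u t :=
      ⟨q.toDeleteEdge _ fun h => hs (q.fst_mem_support_of_mem_edges h)⟩
    exact isBridge_iff.mp (isAcyclic_iff_forall_isBridge.mp hF hsu) (hst'.trans hut.symm)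

lemma ncard_image_connectedComponentMk_lt {G H : SimpleGraph α} (hle : H ≤ G) {S : Set α}
    (hS : S.Finite) {s t : α} (hs : s ∈ S) (ht : t ∈ S) (hG : G.Reachable s t)
    (hH : ¬ H.Reachable s t) :
    (G.connectedComponentMk '' S).ncard < (H.connectedComponentMk '' S).ncard := by
  set φ := ConnectedComponent.map (Hom.ofLE hle)
  have himage : G.connectedComponentMk '' S = φ '' (H.connectedComponentMk '' S) := by
    rw [Set.image_image]
    rfl
  rw [himage]
  refine (Set.ncard_image_le (hS.image _)).lt_of_ne fun h => hH (ConnectedComponent.exact ?_)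
  exact Set.injOn_of_ncard_image_eq h (hS.image _) ⟨s, hs, rfl⟩ ⟨t, ht, rfl⟩
    (ConnectedComponent.sound hG)

theorem IsAcyclic.exists_pairwise_not_reachable_deleteEdges [Finite α] {F : SimpleGraph α}
    (hF : F.IsAcyclic) (S : Set α) :
    ∃ A : Finset (Sym2 α), (A : Set (Sym2 α)) ⊆ F.edgeSet ∧
      #A + (F.connectedComponentMk '' S).ncard ≤ S.ncard ∧
      S.Pairwise fun x y => ¬ (F.deleteEdges A).Reachable x y := by
  classical
  induction hn : F.edgeSet.ncard using Nat.strong_induction_on generalizing F with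
  | _ n ih =>
  by_cases hsep : S.Pairwise fun x y => ¬ F.Reachable x y
  · exact ⟨∅, by simp, by simpa using Set.ncard_image_le S.toFinite, by simpa using hsep⟩
  obtain ⟨s, hs, t, ht, hst, hr⟩ : ∃ s ∈ S, ∃ t ∈ S, s ≠ t ∧ F.Reachable s t := by
    simpa [Set.Pairwise] using hsep
  obtain ⟨e, he, hnr⟩ := hF.exists_not_reachable_deleteEdges hst hr
  have hlt : (F.deleteEdges {e}).edgeSet.ncard < n := by
    rw [edgeSet_deleteEdges, ← hn]
    exact Set.ncard_sdiff_singleton_lt_of_mem he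
  obtain ⟨A, hA, hcard, hAsep⟩ := ih _ hlt (hF.anti (deleteEdges_le _)) rfl
  have hcomp := ncard_image_connectedComponentMk_lt (deleteEdges_le {e}) S.toFinite hs ht hr hnr
  refine ⟨insert e A, ?_, ?_, ?_⟩
  · rw [coe_insert]
    exact Set.insert_subset he (hA.trans (edgeSet_mono (deleteEdges_le _)))
  · have := card_insert_le e A
    omega
  · rwa [coe_insert, Set.insert_eq, ← deleteEdges_deleteEdges]

variable [DecidableEq α]

-- The handshake lemma, applied to the edges of `D` in the component of `a`.
lemma exists_reachable_odd_edgeDegree [Fintype α] {H : SimpleGraph α} {D : Finset (Sym2 α)}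
    (hD : (D : Set (Sym2 α)) ⊆ H.edgeSet) {a : α} (ha : Odd (edgeDegree D a)) :
    ∃ v ≠ a, H.Reachable a v ∧ Odd (edgeDegree D v) := by
  classical
  by_contra! hothers
  set Da := D.filter (fun e => ∀ w ∈ e, H.Reachable a w)
  have hdeg (v : α) : edgeDegree Da v = if H.Reachable a v then edgeDegree D v else 0 := by
    split_ifs with hv
    · simp only [edgeDegree, Da, filter_filter]
      exact congrArg card <| filter_congr fun e he => and_iff_right_of_imp fun hve _ hw =>
        hv.trans (Reachable.of_mem_edge (hD he) hve hw)
    · simp only [edgeDegree, Da, filter_filter, card_eq_zero, filter_eq_empty_iff]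
      exact fun e _ ⟨hall, hve⟩ => hv (hall v hve)
  have hsum := sum_edgeDegree_eq_two_mul_card (D := Da)
    fun e he => H.not_isDiag_of_mem_edgeSet (hD (mem_filter.mp he).1)
  rw [← add_sum_erase _ _ (mem_univ a), hdeg, if_pos .rfl] at hsum
  have htail : Even (∑ v ∈ univ.erase a, edgeDegree Da v) := by
    refine even_sum _ fun v hv => ?_
    rw [hdeg]
    split_ifs with hr
    · exact Nat.not_odd_iff_even.mp (hothers v (ne_of_mem_erase hv) hr)
    · exact .zero
  exact Nat.not_even_iff_odd.mpr ha <| (Nat.even_add.mp (hsum ▸ even_two_mul _)).mpr htail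

lemma IsAcyclic.eq_empty_of_even_edgeDegree [Fintype α] {H : SimpleGraph α} (hH : H.IsAcyclic)
    {D : Finset (Sym2 α)} (hD : (D : Set (Sym2 α)) ⊆ H.edgeSet)
    (heven : ∀ v, Even (edgeDegree D v)) : D = ∅ := by
  by_contra hne
  obtain ⟨⟨a, b⟩, hab⟩ := nonempty_iff_ne_empty.mpr hne
  have hbridge : ¬ (H.deleteEdges {s(a, b)}).Reachable a b :=
    isBridge_iff.mp (isAcyclic_iff_forall_isBridge.mp hH (hD hab))
  have hD' : ((D.erase s(a, b) : Finset (Sym2 α)) : Set (Sym2 α)) ⊆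
      (H.deleteEdges {s(a, b)}).edgeSet := by
    intro e he
    rw [coe_erase] at he
    rw [edgeSet_deleteEdges]
    exact ⟨hD he.1, he.2⟩
  have hodd : Odd (edgeDegree (D.erase s(a, b)) a) := by
    have := edgeDegree_erase_add_one hab (Sym2.mem_mk_left a b)
    have := heven a
    grind
  obtain ⟨v, hva, hreach, hvodd⟩ := exists_reachable_odd_edgeDegree hD' hodd
  have hvb : v ≠ b := by rintro rfl; exact hbridge hreach
  rw [edgeDegree_erase_of_notMem (by simp [hva, hvb])] at hvodd
  exact Nat.not_even_iff_odd.mpr hvodd (heven v)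

theorem isF2Cycle_restrict_sup_iff [Fintype α] {G H : SimpleGraph α} {X Y : Set α}
    (hXY : X ∪ Y = Set.univ) (hsep : ∀ x ∈ X \ Y, ∀ y ∈ Y \ X, ¬ G.Adj x y) (hHG : H ≤ G)
    (hH : H.IsAcyclic) (hHsep : (X ∩ Y).Pairwise fun x y => ¬ H.Reachable x y)
    (C : Finset (Sym2 α)) : (G.restrict X ⊔ H).IsF2Cycle C ↔ (G.restrict X).IsF2Cycle C := by
  classical
  refine ⟨fun ⟨hCE, hCeven⟩ => ⟨?_, hCeven⟩,
    fun ⟨hCE, hCeven⟩ => ⟨fun e he => edgeSet_mono le_sup_left (hCE e he), hCeven⟩⟩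
  set D := C.filter fun e => ¬ ∀ v ∈ e, v ∈ X
  have hDH : (D : Set (Sym2 α)) ⊆ H.edgeSet := by
    intro e he
    obtain ⟨heC, heX⟩ := mem_filter.mp he
    rcases edgeSet_sup .. ▸ hCE e heC with h | h
    · exact absurd (mem_edgeSet_restrict.mp h).2 heX
    · exact h
  have hodd (v : α) (hv : Odd (edgeDegree D v)) : v ∈ X ∩ Y := by
    have hvX : v ∈ X := by
      by_contra hvX
      have hCD : edgeDegree D v = edgeDegree C v := by
        simp only [edgeDegree, D, filter_filter]
        exact congrArg card <| filter_congr fun e _ =>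
          and_iff_right_of_imp fun hve hall => hvX (hall v hve)
      exact Nat.not_even_iff_odd.mpr hv (hCD ▸ hCeven v)
    obtain ⟨e, he⟩ := card_pos.mp hv.pos
    obtain ⟨heD, hve⟩ := mem_filter.mp he
    obtain ⟨u, rfl⟩ := Sym2.mem_iff_exists.mp hve
    have huX : u ∉ X := fun huX => (mem_filter.mp heD).2 (by simp [hvX, huX])
    have huY : u ∈ Y := ((hXY ▸ Set.mem_univ u : u ∈ X ∪ Y)).resolve_left huX
    exact ⟨hvX, by_contra fun hvY => hsep v ⟨hvX, hvY⟩ u ⟨huY, huX⟩ (hHG (hDH heD))⟩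
  have heven (v : α) : Even (edgeDegree D v) := by
    by_contra hv
    rw [Nat.not_even_iff_odd] at hv
    obtain ⟨w, hwv, hreach, hw⟩ := exists_reachable_odd_edgeDegree hDH hv
    exact hHsep (hodd v hv) (hodd w hw) hwv.symm hreach
  have hD := filter_eq_empty_iff.mp (hH.eq_empty_of_even_edgeDegree hDH heven)
  intro e he
  refine mem_edgeSet_restrict.mpr ⟨?_, not_not.mp (hD he)⟩
  rcases edgeSet_sup .. ▸ hCE e he with h | h
  · exact (mem_edgeSet_restrict.mp h).1
  · exact edgeSet_mono hHG h

end SimpleGraph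

open SimpleGraph

theorem exists_edge_cut_of_spanning_tree_general (G : SimpleGraph V)
    (X Y : Set V) (k : ℕ)
    (hXY : X ∪ Y = Set.univ) (hsep : ∀ x ∈ X \ Y, ∀ y ∈ Y \ X, ¬ G.Adj x y)
    (hk : (X ∩ Y).ncard = k)
    (F : SimpleGraph V) (hFG : F ≤ G) (hF : F.IsTree) :
    ∃ A : Finset (Sym2 V), (A : Set (Sym2 V)) ⊆ F.edgeSet ∧ A.card ≤ k - 1 ∧
      (∀ x ∈ X ∩ Y, ∀ y ∈ X ∩ Y, x ≠ y →
        ¬ (F.deleteEdges (A : Set (Sym2 V))).Reachable x y) ∧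
      (∀ C : Finset (Sym2 V),
        (G.restrict X ⊔ F.deleteEdges (A : Set (Sym2 V))).IsF2Cycle C ↔
          (G.restrict X).IsF2Cycle C) ∧
      (G.restrict X ⊔ F.deleteEdges (A : Set (Sym2 V))).bn = (G.restrict X).bn := by
  obtain ⟨A, hAF, hAcard, hAsep⟩ :=
    hF.isAcyclic.exists_pairwise_not_reachable_deleteEdges (X ∩ Y)
  have hcycle := isF2Cycle_restrict_sup_iff hXY hsep ((deleteEdges_le _).trans hFG)
    (hF.isAcyclic.anti (deleteEdges_le _)) hAsep
  refine ⟨A, hAF, ?_, fun x hx y hy hxy => hAsep hx hy hxy, hcycle, bnSet_congr hcycle⟩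
  rcases (X ∩ Y).eq_empty_or_nonempty with hempty | hne
  · simp only [hempty, Set.image_empty, Set.ncard_empty] at hAcard
    omega
  · have := (Set.ncard_pos (Set.toFinite _)).mpr (hne.image F.connectedComponentMk)
    omega

/-- for a connected graph `G` with a separation `(X, Y)` of order `k` and
a spanning tree `F` of `G`, there is a set `A` of at most `k - 1` edges of `F` such that
the vertices of `X ∩ Y` lie in pairwise different components of `F - A`, the graph
`G[X] ∪ (F - A)` has the same cycle space as `G[X]` (the trees of `F - A` create no new
cycles), and `bn(G[X] ∪ (F - A)) = bn(G[X])`. -/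
theorem exists_edge_cut_of_spanning_tree (G : SimpleGraph V) (hG : G.Connected)
    (X Y : Set V) (k : ℕ)
    (hXY : X ∪ Y = Set.univ) (hsep : ∀ x ∈ X \ Y, ∀ y ∈ Y \ X, ¬ G.Adj x y)
    (hk : (X ∩ Y).ncard = k)
    (F : SimpleGraph V) (hFG : F ≤ G) (hF : F.IsTree) :
    ∃ A : Finset (Sym2 V), (A : Set (Sym2 V)) ⊆ F.edgeSet ∧ A.card ≤ k - 1 ∧
      (∀ x ∈ X ∩ Y, ∀ y ∈ X ∩ Y, x ≠ y →
        ¬ (F.deleteEdges (A : Set (Sym2 V))).Reachable x y) ∧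
      (∀ C : Finset (Sym2 V),
        (G.restrict X ⊔ F.deleteEdges (A : Set (Sym2 V))).IsF2Cycle C ↔
          (G.restrict X).IsF2Cycle C) ∧
      (G.restrict X ⊔ F.deleteEdges (A : Set (Sym2 V))).bn = (G.restrict X).bn :=
  exists_edge_cut_of_spanning_tree_general G X Y k hXY hsep hk F hFG hF
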